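/- arXiv:2306.04227 — 2 statements merged into one kernel-verified Lean document; each statement's English description precedes it below -/
import Mathlib

section
/- Model an additive homomorphic encryption scheme by an additive commutative group C of ciphertexts, a group homomorphism Dec : C →+ ℤ (decryption), and a map Enc : ℤ → C (encryption) satisfying Dec(Enc x) = x for all x ∈ ℤ. Let r be an integer and S a finite set of positive natural numbers. Then Dec( Σ_{i ∈ S} ( Enc(r^i) − r • Enc(r^{i−1}) ) ) = 0. -/
/-- Correctness of Rache's randomization routine `CZero`: for any finite set
`S` of positive indices, the sum of `Enc (r^i) - r • Enc (r^(i-1))` over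
`i ∈ S` decrypts to zero. -/
theorem czero_correct
    {C : Type*} [AddCommGroup C]
    (Dec : C →+ ℤ) (Enc : ℤ → C)
    (hDec : ∀ x : ℤ, Dec (Enc x) = x)
    (r : ℤ) (S : Finset ℕ) (hS : ∀ i ∈ S, 0 < i) :
    Dec (∑ i ∈ S, (Enc (r ^ i) - r • Enc (r ^ (i - 1)))) = 0 := by
  rw [map_sum]
  apply Finset.sum_eq_zero
  intro i hi
  obtain ⟨j, rfl⟩ := Nat.exists_eq_succ_of_ne_zero (hS i hi).ne'
  rw [map_sub, map_zsmul, hDec, hDec]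
  simp [pow_succ]
  ring
end

section
/- Model a fully homomorphic encryption scheme supporting ciphertext addition and plaintext-constant multiplication by a ℚ-module V of ciphertexts, a ℚ-linear map Dec : V →ₗ[ℚ] ℚ (decryption), and a map Enc : ℚ → V (encryption) satisfying Dec(Enc x) = x for all x ∈ ℚ. Let b, n, m, k be natural numbers with b ≥ 2, n ≥ 1, k < b^n; let d be the list of base-b digits of m and let c_i = (k / b^{n−i}) mod b for 1 ≤ i ≤ n. Then Dec( Σ_{j < length d} (b : ℚ)^j • Enc(d[j]) + Σ_{i=1}^{n} ((1 : ℚ)/b)^i • Enc(c_i) ) = (m : ℚ) + (k : ℚ)/b^n. -/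
private lemma ofDigits_fin_sum (b : ℕ) :
    ∀ L : List ℕ, ∑ j : Fin L.length, (b : ℚ) ^ (j : ℕ) * (L.get j : ℚ)
      = ((Nat.ofDigits b L : ℕ) : ℚ) := by
  intro L
  induction L with
  | nil => simp
  | cons a L ih =>
    simp only [List.length_cons, Fin.sum_univ_succ]
    simp only [Nat.ofDigits_cons, Fin.val_zero, pow_zero, one_mul]
    push_cast at ih ⊢
    rw [← ih]
    simp only [Fin.val_succ, pow_succ, List.get_cons_succ, Finset.mul_sum]
    congr 1
    apply Finset.sum_congr rfl
    intro j _
    show (b:ℚ) ^ (j:ℕ) * b * (L.get j : ℚ) = b * ((b:ℚ) ^ (j:ℕ) * (L.get j : ℚ))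
    ring

private lemma digit_sum_nat (b : ℕ) (hb : 1 ≤ b) :
    ∀ n k : ℕ, k < b ^ n → ∑ j ∈ Finset.range n, b ^ j * (k / b ^ j % b) = k := by
  intro n
  induction n with
  | zero => intro k hk; simpa using (Nat.lt_one_iff.mp (by simpa using hk)).symm
  | succ n ih =>
    intro k hk
    rw [Finset.sum_range_succ']
    have h1 : ∀ j, b ^ (j + 1) * (k / b ^ (j + 1) % b) = b * (b ^ j * ((k / b) / b ^ j % b)) := by
      intro j
      rw [pow_succ, Nat.div_div_eq_div_mul]
      ring
    simp only [h1, ← Finset.mul_sum]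
    have hkb : k / b < b ^ n := by
      rw [Nat.div_lt_iff_lt_mul (by omega : 0 < b)]
      calc k < b ^ (n + 1) := hk
        _ = b ^ n * b := by rw [pow_succ]
    rw [ih (k / b) hkb]
    simp [Nat.mul_comm, Nat.div_add_mod]

/-- Correctness of Algorithm 2 (FSEnc): the ciphertext assembled by
constant-multiplying each cached coefficient encryption `Enc (d[j])` by `b^j`
(integer part) and each `Enc (c_i)` by `(1/b)^i` (decimal part), and summing,
decrypts to `m + k/b^n`. -/
theorem fsenc_correct
    {V : Type*} [AddCommGroup V] [Module ℚ V]
    (Dec : V →ₗ[ℚ] ℚ) (Enc : ℚ → V)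
    (hDec : ∀ x : ℚ, Dec (Enc x) = x)
    (b n m k : ℕ) (hb : 2 ≤ b) (hn : 1 ≤ n) (hk : k < b ^ n) :
    Dec (∑ j : Fin (Nat.digits b m).length,
            ((b : ℚ) ^ (j : ℕ)) • Enc (((Nat.digits b m).get j : ℕ) : ℚ)
        + ∑ i ∈ Finset.Icc 1 n,
            ((1 / (b : ℚ)) ^ i) • Enc (((k / b ^ (n - i) % b : ℕ) : ℚ)))
      = (m : ℚ) + (k : ℚ) / (b : ℚ) ^ n := by
  have hb0 : (b : ℚ) ≠ 0 := by positivity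
  rw [map_add, map_sum, map_sum]
  simp only [map_smul, hDec, smul_eq_mul]
  congr 1
  · rw [ofDigits_fin_sum, Nat.ofDigits_digits]
  · -- decimal part
    have hre : ∑ i ∈ Finset.Icc 1 n, (1 / (b : ℚ)) ^ i * ((k / b ^ (n - i) % b : ℕ) : ℚ)
        = ∑ j ∈ Finset.range n, (1 / (b : ℚ)) ^ (n - j) * ((k / b ^ j % b : ℕ) : ℚ) := by
      apply Finset.sum_nbij' (fun i => n - i) (fun j => n - j)
      · intro i hi; simp only [Finset.mem_Icc] at hi; simp [Finset.mem_range]; omega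
      · intro j hj; simp only [Finset.mem_range] at hj; simp [Finset.mem_Icc]; omega
      · intro i hi; simp only [Finset.mem_Icc] at hi; omega
      · intro j hj; simp only [Finset.mem_range] at hj; omega
      · intro i hi; simp only [Finset.mem_Icc] at hi
        congr 2
        omega
    rw [hre]
    have key := digit_sum_nat b (by omega) n k hk
    have keyQ : ∑ j ∈ Finset.range n, (b : ℚ) ^ j * ((k / b ^ j % b : ℕ) : ℚ) = (k : ℚ) := by
      have h := congrArg (Nat.cast (R := ℚ)) key
      push_cast at h
      exact h
    rw [← keyQ, Finset.sum_div]
    apply Finset.sum_congr rfl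
    intro j hj
    simp only [Finset.mem_range] at hj
    rw [div_pow, one_pow]
    rw [show n = j + (n - j) by omega, pow_add]
    field_simp
    simp only [Nat.add_sub_cancel_left]
    ring
end
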